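/- arXiv:2605.04175 — 2 statements merged into one kernel-verified Lean document; each statement's English description precedes it below -/
import Mathlib

section
/- For any nonnegative matrix Π ∈ ℝ₊^{n×m}, there exists a matrix Π̃ in the transport polytope U(a,b) such that ‖Π - Π̃‖₁ ≤ 2(‖a - Π 1_m‖₁ + ‖b - Πᵀ 1_n‖₁), where ‖·‖₁ on matrices denotes the entrywise ℓ₁ norm. -/
open Finset

theorem stmt2 (n m : ℕ) (a : Fin n → ℝ) (b : Fin m → ℝ)
    (ha : ∀ i, 0 ≤ a i) (hb : ∀ j, 0 ≤ b j)
    (hab : ∑ i, a i = ∑ j, b j)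
    (P : Matrix (Fin n) (Fin m) ℝ) (hP : ∀ i j, 0 ≤ P i j) :
    ∃ Q : Matrix (Fin n) (Fin m) ℝ,
      (∀ i j, 0 ≤ Q i j) ∧ (∀ i, ∑ j, Q i j = a i) ∧ (∀ j, ∑ i, Q i j = b j) ∧
      ∑ i, ∑ j, |P i j - Q i j|
        ≤ 2 * ((∑ i, |a i - ∑ j, P i j|) + (∑ j, |b j - ∑ i, P i j|)) := by
  classical
  set r : Fin n → ℝ := fun i => ∑ j, P i j with hrdef
  set c : Fin m → ℝ := fun j => ∑ i, P i j with hcdef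
  have hr0 : ∀ i, 0 ≤ r i := fun i => Finset.sum_nonneg fun j _ => hP i j
  -- row rescaling
  set P1 : Matrix (Fin n) (Fin m) ℝ := fun i j => (min (a i) (r i) / r i) * P i j with hP1def
  have hfac1 : ∀ i, 0 ≤ min (a i) (r i) / r i :=
    fun i => div_nonneg (le_min (ha i) (hr0 i)) (hr0 i)
  have hP1nn : ∀ i j, 0 ≤ P1 i j := fun i j => mul_nonneg (hfac1 i) (hP i j)
  have hP1le : ∀ i j, P1 i j ≤ P i j := by
    intro i j
    rcases eq_or_lt_of_le (hr0 i) with h | h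
    · have hz : P i j = 0 :=
        (Finset.sum_eq_zero_iff_of_nonneg (fun j _ => hP i j)).mp h.symm j (mem_univ j)
      simp [hP1def, hz]
    · have h1 : min (a i) (r i) / r i ≤ 1 := div_le_one_of_le₀ (min_le_right _ _) (hr0 i)
      calc P1 i j ≤ 1 * P i j := mul_le_mul_of_nonneg_right h1 (hP i j)
        _ = P i j := one_mul _
  have hP1row : ∀ i, ∑ j, P1 i j = min (a i) (r i) := by
    intro i
    have hsum : ∑ j, P1 i j = (min (a i) (r i) / r i) * r i := by
      rw [hrdef]; simp only [hP1def]
      rw [← Finset.mul_sum]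
    rcases eq_or_lt_of_le (hr0 i) with h | h
    · rw [hsum, ← h]
      simp [min_eq_right (ha i)]
    · rw [hsum, div_mul_cancel₀ _ h.ne']
  -- column rescaling
  set c1 : Fin m → ℝ := fun j => ∑ i, P1 i j with hc1def
  have hc10 : ∀ j, 0 ≤ c1 j := fun j => Finset.sum_nonneg fun i _ => hP1nn i j
  have hc1le : ∀ j, c1 j ≤ c j := fun j => Finset.sum_le_sum fun i _ => hP1le i j
  set P2 : Matrix (Fin n) (Fin m) ℝ := fun i j => (min (b j) (c1 j) / c1 j) * P1 i j with hP2def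
  have hfac2 : ∀ j, 0 ≤ min (b j) (c1 j) / c1 j :=
    fun j => div_nonneg (le_min (hb j) (hc10 j)) (hc10 j)
  have hP2nn : ∀ i j, 0 ≤ P2 i j := fun i j => mul_nonneg (hfac2 j) (hP1nn i j)
  have hP2le : ∀ i j, P2 i j ≤ P1 i j := by
    intro i j
    rcases eq_or_lt_of_le (hc10 j) with h | h
    · have hz : P1 i j = 0 :=
        (Finset.sum_eq_zero_iff_of_nonneg (fun i _ => hP1nn i j)).mp h.symm i (mem_univ i)
      simp [hP2def, hz]
    · have h1 : min (b j) (c1 j) / c1 j ≤ 1 := div_le_one_of_le₀ (min_le_right _ _) (hc10 j)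
      calc P2 i j ≤ 1 * P1 i j := mul_le_mul_of_nonneg_right h1 (hP1nn i j)
        _ = P1 i j := one_mul _
  have hP2col : ∀ j, ∑ i, P2 i j = min (b j) (c1 j) := by
    intro j
    have hsum : ∑ i, P2 i j = (min (b j) (c1 j) / c1 j) * c1 j := by
      rw [hc1def]; simp only [hP2def]
      rw [← Finset.mul_sum]
    rcases eq_or_lt_of_le (hc10 j) with h | h
    · rw [hsum, ← h]
      simp [min_eq_right (hb j)]
    · rw [hsum, div_mul_cancel₀ _ h.ne']
  -- errors
  set ea : Fin n → ℝ := fun i => a i - ∑ j, P2 i j with headef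
  set eb : Fin m → ℝ := fun j => b j - ∑ i, P2 i j with hebdef
  have hea : ∀ i, 0 ≤ ea i := by
    intro i
    have h1 : ∑ j, P2 i j ≤ ∑ j, P1 i j := Finset.sum_le_sum fun j _ => hP2le i j
    have h2 : (∑ j, P1 i j) ≤ a i := by rw [hP1row i]; exact min_le_left _ _
    simp only [headef]; linarith
  have heb : ∀ j, 0 ≤ eb j := by
    intro j
    have h2 : (∑ i, P2 i j) ≤ b j := by rw [hP2col j]; exact min_le_left _ _
    simp only [hebdef]; linarith
  set D : ℝ := ∑ i, ea i with hDdef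
  have hDnn : 0 ≤ D := Finset.sum_nonneg fun i _ => hea i
  have hebD : ∑ j, eb j = D := by
    simp only [hebdef, hDdef, headef, Finset.sum_sub_distrib]
    rw [← hab, Finset.sum_comm]
  -- the rounded matrix
  refine ⟨fun i j => P2 i j + ea i * eb j / D, ?_, ?_, ?_, ?_⟩
  · intro i j
    have : 0 ≤ ea i * eb j / D := div_nonneg (mul_nonneg (hea i) (heb j)) hDnn
    have := hP2nn i j
    positivity
  · intro i
    rw [Finset.sum_add_distrib]
    have h1 : ∑ j, ea i * eb j / D = ea i * D / D := by
      rw [← Finset.sum_div, ← Finset.mul_sum, hebD]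
    rw [h1]
    rcases eq_or_lt_of_le hDnn with h | h
    · have hz : ea i = 0 :=
        (Finset.sum_eq_zero_iff_of_nonneg (fun i _ => hea i)).mp h.symm i (mem_univ i)
      have : a i - ∑ j, P2 i j = 0 := hz
      rw [hz]; simp; linarith
    · rw [mul_div_assoc, div_self h.ne', mul_one]
      simp only [headef]; ring
  · intro j
    rw [Finset.sum_add_distrib]
    have h1 : ∑ i, ea i * eb j / D = D * eb j / D := by
      rw [← Finset.sum_div, ← Finset.sum_mul]
    rw [h1]
    rcases eq_or_lt_of_le hDnn with h | h
    · have hz : eb j = 0 := by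
        have hsum0 : ∑ j, eb j = 0 := by rw [hebD, ← h]
        exact (Finset.sum_eq_zero_iff_of_nonneg (fun j _ => heb j)).mp hsum0 j (mem_univ j)
      have : b j - ∑ i, P2 i j = 0 := hz
      rw [hz]; simp; linarith
    · rw [mul_comm, mul_div_assoc, div_self h.ne', mul_one]
      simp only [hebdef]; ring
  · -- the bound
    have hcorr : ∀ i j, 0 ≤ ea i * eb j / D :=
      fun i j => div_nonneg (mul_nonneg (hea i) (heb j)) hDnn
    have hstep : ∑ i, ∑ j, |P i j - (P2 i j + ea i * eb j / D)|
        ≤ (∑ i, ∑ j, (P i j - P2 i j)) + ∑ i, ∑ j, ea i * eb j / D := by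
      rw [← Finset.sum_add_distrib]
      refine Finset.sum_le_sum fun i _ => ?_
      rw [← Finset.sum_add_distrib]
      refine Finset.sum_le_sum fun j _ => ?_
      have h1 : P2 i j ≤ P i j := le_trans (hP2le i j) (hP1le i j)
      have h2 := hcorr i j
      rw [abs_le]; constructor <;> nlinarith
    have hcorrsum : ∑ i, ∑ j, ea i * eb j / D ≤ D := by
      have : ∑ i, ∑ j, ea i * eb j / D = D * D / D := by
        calc ∑ i, ∑ j, ea i * eb j / D = ∑ i, ea i * D / D := by
              refine Finset.sum_congr rfl fun i _ => ?_
              rw [← Finset.sum_div, ← Finset.mul_sum, hebD]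
          _ = D * D / D := by rw [← Finset.sum_div, ← Finset.sum_mul]
      rw [this]
      rcases eq_or_lt_of_le hDnn with h | h
      · rw [← h]; simp
      · rw [mul_div_assoc, div_self h.ne', mul_one]
    -- key sums
    have hsplit : ∑ i, ∑ j, (P i j - P2 i j)
        = (∑ i, (r i - min (a i) (r i))) + ∑ j, (c1 j - min (b j) (c1 j)) := by
      have e1 : ∑ i, ∑ j, (P i j - P1 i j) = ∑ i, (r i - min (a i) (r i)) := by
        refine Finset.sum_congr rfl fun i _ => ?_
        rw [Finset.sum_sub_distrib, hP1row i]
      have e2 : ∑ i, ∑ j, (P1 i j - P2 i j) = ∑ j, (c1 j - min (b j) (c1 j)) := by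
        rw [Finset.sum_comm]
        refine Finset.sum_congr rfl fun j _ => ?_
        rw [Finset.sum_sub_distrib, hP2col j]
      calc ∑ i, ∑ j, (P i j - P2 i j)
          = (∑ i, ∑ j, (P i j - P1 i j)) + ∑ i, ∑ j, (P1 i j - P2 i j) := by
            rw [← Finset.sum_add_distrib]
            refine Finset.sum_congr rfl fun i _ => ?_
            rw [← Finset.sum_add_distrib]
            refine Finset.sum_congr rfl fun j _ => ?_
            ring
        _ = _ := by rw [e1, e2]
    have hDval : D = ∑ j, (b j - min (b j) (c1 j)) := by
      rw [← hebD]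
      refine Finset.sum_congr rfl fun j _ => ?_
      simp only [hebdef]
      rw [hP2col j]
    -- bounds on the pieces
    have hA : ∑ i, (r i - min (a i) (r i)) ≤ ∑ i, |a i - r i| := by
      refine Finset.sum_le_sum fun i _ => ?_
      rcases le_total (a i) (r i) with h | h
      · rw [min_eq_left h, abs_of_nonpos (by linarith)]; linarith
      · rw [min_eq_right h]; simp [abs_nonneg]
    have hB1 : ∑ j, (c1 j - min (b j) (c1 j)) ≤ ∑ j, |b j - c j| := by
      refine Finset.sum_le_sum fun j _ => ?_
      rcases le_total (b j) (c1 j) with h | h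
      · rw [min_eq_left h]
        have := hc1le j
        have : c1 j - b j ≤ |b j - c j| := by
          rw [abs_sub_comm]
          calc c1 j - b j ≤ c j - b j := by linarith [hc1le j]
            _ ≤ |c j - b j| := le_abs_self _
        linarith
      · rw [min_eq_right h]; simp [abs_nonneg]
    have hcc1 : ∑ j, (c j - c1 j) = ∑ i, (r i - min (a i) (r i)) := by
      have : ∑ j, (c j - c1 j) = ∑ i, ∑ j, (P i j - P1 i j) := by
        rw [Finset.sum_comm]
        refine Finset.sum_congr rfl fun j _ => ?_
        rw [Finset.sum_sub_distrib]
      rw [this]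
      refine Finset.sum_congr rfl fun i _ => ?_
      rw [Finset.sum_sub_distrib, hP1row i]
    have hB2 : D ≤ (∑ j, |b j - c j|) + ∑ j, (c j - c1 j) := by
      rw [hDval, ← Finset.sum_add_distrib]
      refine Finset.sum_le_sum fun j _ => ?_
      rcases le_total (b j) (c1 j) with h | h
      · rw [min_eq_left h]
        have := hc1le j
        have := abs_nonneg (b j - c j)
        linarith
      · rw [min_eq_right h]
        have h1 : b j - c j ≤ |b j - c j| := le_abs_self _
        linarith
    have hBnn : 0 ≤ ∑ j, |b j - c j| := Finset.sum_nonneg fun j _ => abs_nonneg _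
    calc ∑ i, ∑ j, |P i j - (P2 i j + ea i * eb j / D)|
        ≤ (∑ i, ∑ j, (P i j - P2 i j)) + ∑ i, ∑ j, ea i * eb j / D := hstep
      _ ≤ ((∑ i, (r i - min (a i) (r i))) + ∑ j, (c1 j - min (b j) (c1 j))) + D := by
          rw [hsplit]; linarith
      _ ≤ 2 * ((∑ i, |a i - r i|) + ∑ j, |b j - c j|) := by
          have := hA
          have := hB1
          have h2 := hB2
          rw [hcc1] at h2
          linarith
end

section
/- If y* is a minimizer of the dual function g(y) = (1/2)‖Proj_{ℝ₊^{n×m}}(A*y + Z)‖_F² - ⟨r, y⟩, then Π* := Proj_{ℝ₊^{n×m}}(A*y* + Z) is the unique minimizer of (1/2)‖Π - Z‖_F² over the transport polytope U(a,b), i.e., the Euclidean projection of Z onto U(a,b). -/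
/-!
Write `y = (u, v)` and `s_ij = u_i + v_j + Z_ij`, so that `Π* = max(s, 0)`. Since
`max(s + t, 0)² ≤ max(s, 0)² + 2 max(s, 0) t + t²`, perturbing `u_i` by `t` changes the
dual objective by at most `t (∑_j Π*_ij - a_i) + (m/2) t²`, and minimality forces the row sums of
`Π*` to be `a`; by symmetry its column sums are `b`. For `P ∈ U(a, b)`,
`Π* - Z = (Π* - s) + (u_i + v_j)`: the second part is orthogonal to `P - Π*` because both have the
same marginals, and `Π* - s ≥ 0` vanishes where `Π* ≠ 0`, so `⟨Π* - Z, P - Π*⟩ ≥ 0`. Expanding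
`‖P - Z‖²` around `Π*` then gives `‖P - Z‖² ≥ ‖Π* - Z‖² + ‖P - Π*‖²`.
-/

open Finset

/-- Dual objective of the Euclidean projection onto the transport polytope. -/
noncomputable def dualG (n m : ℕ) (Z : Matrix (Fin n) (Fin m) ℝ)
    (a : Fin n → ℝ) (b : Fin m → ℝ)
    (y : EuclideanSpace ℝ (Fin n ⊕ Fin m)) : ℝ :=
  (1 / 2) * ∑ i, ∑ j, (max (y (Sum.inl i) + y (Sum.inr j) + Z i j) 0) ^ 2
    - ((∑ i, a i * y (Sum.inl i)) + (∑ j, b j * y (Sum.inr j)))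

lemma sq_max_add_le (s t : ℝ) : max (s + t) 0 ^ 2 ≤ max s 0 ^ 2 + 2 * max s 0 * t + t ^ 2 := by
  rcases le_total (s + t) 0 with h₁ | h₁ <;> rcases le_total s 0 with h₂ | h₂ <;>
    simp only [max_eq_left, max_eq_right, *] <;> nlinarith

lemma max_sub_mul_max_eq_zero (s : ℝ) : (max s 0 - s) * max s 0 = 0 := by
  rcases le_total s 0 with h | h <;> simp [h]

lemma sum_sq_sub_le_of_sum_mul_nonneg {ι κ : Type*} [Fintype ι] [Fintype κ]
    {P Q Z : Matrix ι κ ℝ} (h : 0 ≤ ∑ i, ∑ j, (Q i j - Z i j) * (P i j - Q i j)) :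
    ∑ i, ∑ j, (Q i j - Z i j) ^ 2 ≤ ∑ i, ∑ j, (P i j - Z i j) ^ 2 ∧
      (P ≠ Q → ∑ i, ∑ j, (Q i j - Z i j) ^ 2 < ∑ i, ∑ j, (P i j - Z i j) ^ 2) := by
  have hsplit : ∑ i, ∑ j, (P i j - Z i j) ^ 2 = ∑ i, ∑ j, (Q i j - Z i j) ^ 2
      + 2 * ∑ i, ∑ j, (Q i j - Z i j) * (P i j - Q i j) + ∑ i, ∑ j, (P i j - Q i j) ^ 2 := by
    simp only [mul_sum, ← sum_add_distrib]
    exact sum_congr rfl fun i _ => sum_congr rfl fun j _ => by ring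
  have hdist : P ≠ Q → 0 < ∑ i, ∑ j, (P i j - Q i j) ^ 2 := by
    intro hne
    obtain ⟨i, j, hij⟩ : ∃ i j, P i j ≠ Q i j := by
      by_contra! h
      exact hne (Matrix.ext h)
    have hij' := sub_ne_zero.2 hij
    exact sum_pos' (fun i _ => sum_nonneg fun j _ => sq_nonneg _)
      ⟨i, mem_univ _, sum_pos' (fun j _ => sq_nonneg _) ⟨j, mem_univ _, by positivity⟩⟩
  have hnonneg : 0 ≤ ∑ i, ∑ j, (P i j - Q i j) ^ 2 :=
    sum_nonneg fun i _ => sum_nonneg fun j _ => sq_nonneg _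
  exact ⟨by linarith, fun hne => by linarith [hdist hne]⟩

section TransportDual

open scoped Matrix

variable {ι κ : Type*}

-- `Proj_{ℝ₊}(A* y + Z)` for `y = (u, v)`, since `(A* y)_ij = u_i + v_j`.
def dualPlan (Z : Matrix ι κ ℝ) (u : ι → ℝ) (v : κ → ℝ) : Matrix ι κ ℝ :=
  Matrix.of fun i j => max (u i + v j + Z i j) 0

@[simp]
lemma dualPlan_apply (Z : Matrix ι κ ℝ) (u : ι → ℝ) (v : κ → ℝ) (i : ι) (j : κ) :
    dualPlan Z u v i j = max (u i + v j + Z i j) 0 :=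
  rfl

lemma dualPlan_transpose (Z : Matrix ι κ ℝ) (u : ι → ℝ) (v : κ → ℝ) :
    dualPlan Zᵀ v u = (dualPlan Z u v)ᵀ := by
  ext j i
  simp only [dualPlan_apply, Matrix.transpose_apply, add_comm (v j)]

variable [Fintype ι] [Fintype κ]

noncomputable def dualObjective (Z : Matrix ι κ ℝ) (a : ι → ℝ) (b : κ → ℝ)
    (u : ι → ℝ) (v : κ → ℝ) : ℝ :=
  (1 / 2) * ∑ i, ∑ j, max (u i + v j + Z i j) 0 ^ 2 - (∑ i, a i * u i + ∑ j, b j * v j)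

def transportPolytope (a : ι → ℝ) (b : κ → ℝ) : Set (Matrix ι κ ℝ) :=
  {P | (∀ i j, 0 ≤ P i j) ∧ (∀ i, ∑ j, P i j = a i) ∧ (∀ j, ∑ i, P i j = b j)}

lemma dualObjective_transpose (Z : Matrix ι κ ℝ) (a : ι → ℝ) (b : κ → ℝ)
    (u : ι → ℝ) (v : κ → ℝ) :
    dualObjective Zᵀ b a v u = dualObjective Z a b u v := by
  simp only [dualObjective, Matrix.transpose_apply, add_comm (v _) (u _)]
  rw [sum_comm, add_comm (∑ j, b j * v j)]

lemma dualObjective_add_le (Z : Matrix ι κ ℝ) (a : ι → ℝ) (b : κ → ℝ)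
    (u d : ι → ℝ) (v : κ → ℝ) :
    dualObjective Z a b (u + d) v ≤ dualObjective Z a b u v
      + ∑ i, d i * (∑ j, dualPlan Z u v i j - a i) + Fintype.card κ / 2 * ∑ i, d i ^ 2 := by
  have hquad : ∑ i, ∑ j, max ((u + d) i + v j + Z i j) 0 ^ 2 ≤
      ∑ i, ∑ j, max (u i + v j + Z i j) 0 ^ 2 + 2 * ∑ i, d i * ∑ j, dualPlan Z u v i j
        + Fintype.card κ * ∑ i, d i ^ 2 :=
    calc _ ≤ ∑ i, ∑ j, (max (u i + v j + Z i j) 0 ^ 2 + 2 * max (u i + v j + Z i j) 0 * d i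
            + d i ^ 2) := by
          gcongr with i _ j _
          rw [show (u + d) i + v j + Z i j = u i + v j + Z i j + d i by
            simp only [Pi.add_apply]; ring]
          exact sq_max_add_le _ _
      _ = _ := by
          simp only [dualPlan_apply, sum_add_distrib, mul_sum, sum_mul, sum_const, card_univ,
            nsmul_eq_mul, mul_assoc, mul_comm (d _)]
  have hlin : ∑ i, a i * (u + d) i = ∑ i, a i * u i + ∑ i, d i * a i := by
    simp only [Pi.add_apply, mul_add, sum_add_distrib, mul_comm (a _) (d _)]
  simp only [dualObjective, hlin, mul_sub, sum_sub_distrib]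
  linarith

variable {Z : Matrix ι κ ℝ} {a : ι → ℝ} {b : κ → ℝ} {u : ι → ℝ} {v : κ → ℝ}

lemma sum_dualPlan_row_eq (hu : ∀ u', dualObjective Z a b u v ≤ dualObjective Z a b u' v)
    (i : ι) : ∑ j, dualPlan Z u v i j = a i := by
  classical
  have hquad : ∀ t : ℝ,
      0 ≤ Fintype.card κ / 2 * (t * t) + (∑ j, dualPlan Z u v i j - a i) * t + 0 := by
    intro t
    have h := (hu _).trans (dualObjective_add_le Z a b u (Pi.single i t) v)
    simp only [Pi.single_apply, ite_mul, zero_mul, sum_ite_eq', mem_univ, if_true, ite_pow,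
      ne_eq, OfNat.ofNat_ne_zero, not_false_eq_true, zero_pow] at h
    linarith
  have hdiscrim := discrim_le_zero hquad
  rw [discrim, mul_zero, sub_zero] at hdiscrim
  exact sub_eq_zero.1 (pow_eq_zero_iff two_ne_zero |>.1 (hdiscrim.antisymm (sq_nonneg _)))

lemma sum_dualPlan_col_eq (hv : ∀ v', dualObjective Z a b u v ≤ dualObjective Z a b u v')
    (j : κ) : ∑ i, dualPlan Z u v i j = b j := by
  simpa only [dualPlan_transpose, Matrix.transpose_apply] using
    sum_dualPlan_row_eq (Z := Zᵀ) (u := v) (v := u) (by simpa only [dualObjective_transpose]) j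

lemma dualPlan_mem_transportPolytope
    (hu : ∀ u', dualObjective Z a b u v ≤ dualObjective Z a b u' v)
    (hv : ∀ v', dualObjective Z a b u v ≤ dualObjective Z a b u v') :
    dualPlan Z u v ∈ transportPolytope a b :=
  ⟨fun _ _ => le_max_right _ _, sum_dualPlan_row_eq hu, sum_dualPlan_col_eq hv⟩

lemma sum_mul_sub_dualPlan_nonneg {P : Matrix ι κ ℝ} (hP : P ∈ transportPolytope a b)
    (hQ : dualPlan Z u v ∈ transportPolytope a b) :
    0 ≤ ∑ i, ∑ j, (dualPlan Z u v i j - Z i j) * (P i j - dualPlan Z u v i j) := by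
  set Q := dualPlan Z u v
  have hentry : ∀ i j, (Q i j - Z i j) * (P i j - Q i j) = (Q i j - (u i + v j + Z i j)) * P i j
      + u i * (P i j - Q i j) + v j * (P i j - Q i j) := fun i j => by
    simp only [Q, dualPlan_apply]
    linear_combination -max_sub_mul_max_eq_zero (u i + v j + Z i j)
  have hrow : ∑ i, ∑ j, u i * (P i j - Q i j) = 0 := sum_eq_zero fun i _ => by
    rw [← mul_sum, sum_sub_distrib, hP.2.1, hQ.2.1, sub_self, mul_zero]
  have hcol : ∑ i, ∑ j, v j * (P i j - Q i j) = 0 := by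
    rw [sum_comm]
    exact sum_eq_zero fun j _ => by
      rw [← mul_sum, sum_sub_distrib, hP.2.2, hQ.2.2, sub_self, mul_zero]
  have hslack : 0 ≤ ∑ i, ∑ j, (Q i j - (u i + v j + Z i j)) * P i j :=
    sum_nonneg fun i _ => sum_nonneg fun j _ =>
      mul_nonneg (sub_nonneg.2 (le_max_left _ _)) (hP.1 i j)
  simpa only [hentry, sum_add_distrib, hrow, hcol, add_zero] using hslack

end TransportDual

theorem stmt7_general (n m : ℕ) (a : Fin n → ℝ) (b : Fin m → ℝ)
    (Z : Matrix (Fin n) (Fin m) ℝ)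
    (ystar : EuclideanSpace ℝ (Fin n ⊕ Fin m))
    (hmin : ∀ y, dualG n m Z a b ystar ≤ dualG n m Z a b y)
    (Pstar : Matrix (Fin n) (Fin m) ℝ)
    (hPstar : ∀ i j, Pstar i j = max (ystar (Sum.inl i) + ystar (Sum.inr j) + Z i j) 0) :
    (∀ i j, 0 ≤ Pstar i j) ∧ (∀ i, ∑ j, Pstar i j = a i) ∧ (∀ j, ∑ i, Pstar i j = b j) ∧
    ∀ P : Matrix (Fin n) (Fin m) ℝ,
      (∀ i j, 0 ≤ P i j) → (∀ i, ∑ j, P i j = a i) → (∀ j, ∑ i, P i j = b j) →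
      ((1 : ℝ) / 2) * ∑ i, ∑ j, (Pstar i j - Z i j) ^ 2
          ≤ (1 / 2) * ∑ i, ∑ j, (P i j - Z i j) ^ 2 ∧
      (P ≠ Pstar →
        ((1 : ℝ) / 2) * ∑ i, ∑ j, (Pstar i j - Z i j) ^ 2
          < (1 / 2) * ∑ i, ∑ j, (P i j - Z i j) ^ 2) := by
  set u : Fin n → ℝ := fun i => ystar (Sum.inl i)
  set v : Fin m → ℝ := fun j => ystar (Sum.inr j)
  obtain rfl : Pstar = dualPlan Z u v := Matrix.ext hPstar
  -- `dualG` at `toLp (Sum.elim u' v')` unfolds to `dualObjective Z a b u' v'`.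
  have hmem : dualPlan Z u v ∈ transportPolytope a b :=
    dualPlan_mem_transportPolytope (fun u' => hmin (WithLp.toLp 2 (Sum.elim u' v)))
      (fun v' => hmin (WithLp.toLp 2 (Sum.elim u v')))
  refine ⟨hmem.1, hmem.2.1, hmem.2.2, fun P hP₀ hProw hPcol => ?_⟩
  obtain ⟨hle, hlt⟩ :=
    sum_sq_sub_le_of_sum_mul_nonneg (sum_mul_sub_dualPlan_nonneg ⟨hP₀, hProw, hPcol⟩ hmem)
  exact ⟨by linarith, fun hne => by linarith [hlt hne]⟩

theorem stmt7 (n m : ℕ) (a : Fin n → ℝ) (b : Fin m → ℝ)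
    (ha : ∀ i, 0 ≤ a i) (hb : ∀ j, 0 ≤ b j) (hab : ∑ i, a i = ∑ j, b j)
    (Z : Matrix (Fin n) (Fin m) ℝ)
    (ystar : EuclideanSpace ℝ (Fin n ⊕ Fin m))
    (hmin : ∀ y, dualG n m Z a b ystar ≤ dualG n m Z a b y)
    (Pstar : Matrix (Fin n) (Fin m) ℝ)
    (hPstar : ∀ i j, Pstar i j = max (ystar (Sum.inl i) + ystar (Sum.inr j) + Z i j) 0) :
    (∀ i j, 0 ≤ Pstar i j) ∧ (∀ i, ∑ j, Pstar i j = a i) ∧ (∀ j, ∑ i, Pstar i j = b j) ∧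
    ∀ P : Matrix (Fin n) (Fin m) ℝ,
      (∀ i j, 0 ≤ P i j) → (∀ i, ∑ j, P i j = a i) → (∀ j, ∑ i, P i j = b j) →
      ((1 : ℝ) / 2) * ∑ i, ∑ j, (Pstar i j - Z i j) ^ 2
          ≤ (1 / 2) * ∑ i, ∑ j, (P i j - Z i j) ^ 2 ∧
      (P ≠ Pstar →
        ((1 : ℝ) / 2) * ∑ i, ∑ j, (Pstar i j - Z i j) ^ 2
          < (1 / 2) * ∑ i, ∑ j, (P i j - Z i j) ^ 2) :=
  stmt7_general n m a b Z ystar hmin Pstar hPstar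
end
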